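/- Let μ ∈ ℝ, σ > 0 and β ≥ 0. Then the (2,2) entry of the matrix J_β(μ,σ) = ∫₀^∞ u_{μ,σ}(x) u_{μ,σ}(x)ᵀ f_{μ,σ}(x)^{1+β} dx satisfies ∫₀^∞ u₂(x)² · f_{μ,σ}(x)^{1+β} dx = (L(β,μ,σ)/σ) · ( β⁴σ⁴/(1+β)² + 6β²σ²/(1+β) + β²(1 − 2σ²) + 2 ). -/

import Mathlib

/-!
Substituting `x = exp y`, the Jacobian `exp y` combines with `f(exp y) ^ (1 + β)` into a single
Gaussian in `y`: completing the square in the exponent gives the constant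
`exp (-β μ + β² σ² / (2 (1 + β)))` times `exp (-(1 + β) (y - m)² / (2 σ²))` centred at
`m = μ - β σ² / (1 + β)`. After shifting by `m`, the integral is a quartic polynomial against a
centred Gaussian; odd moments vanish by symmetry and the even ones follow from
`∫ t ^ (n + 2) e^{-a t²} = (n + 1) / (2 a) ∫ t ^ n e^{-a t²}` (integration by parts).
-/

open Real MeasureTheory Set

/-- The log-normal density with parameters `μ` and `σ`. -/
noncomputable def lognormalPdf (μ σ : ℝ) (x : ℝ) : ℝ :=
  if 0 < x then
    (1 / (x * σ * Real.sqrt (2 * Real.pi))) * Real.exp (-(Real.log x - μ) ^ 2 / (2 * σ ^ 2))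
  else 0

/-- First component of the score function of the log-normal model. -/
noncomputable def scoreU1 (μ σ : ℝ) (x : ℝ) : ℝ := (Real.log x - μ) / σ ^ 2

/-- Second component of the score function of the log-normal model. -/
noncomputable def scoreU2 (μ σ : ℝ) (x : ℝ) : ℝ := ((Real.log x - μ) ^ 2 - σ ^ 2) / σ ^ 3

/-- The common multiplicative factor `L(β, μ, σ)`. -/
noncomputable def Lfactor (β μ σ : ℝ) : ℝ :=
  Real.exp (-β * μ + β ^ 2 * σ ^ 2 / (2 * (1 + β))) /
    (σ ^ (1 + β) * (2 * Real.pi) ^ (β / 2) * (1 + β) ^ ((5 : ℝ) / 2))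

section GaussianMoments

variable {a : ℝ}

theorem integrable_pow_mul_exp_neg_mul_sq (ha : 0 < a) (n : ℕ) :
    Integrable fun t : ℝ => t ^ n * exp (-a * t ^ 2) := by
  simpa [rpow_natCast] using
    integrable_rpow_mul_exp_neg_mul_sq ha (s := n) (neg_one_lt_zero.trans_le n.cast_nonneg)

theorem integral_pow_mul_exp_neg_mul_sq_of_odd {n : ℕ} (hn : Odd n) :
    ∫ t : ℝ, t ^ n * exp (-a * t ^ 2) = 0 := by
  have h := integral_neg_eq_self (fun t : ℝ => t ^ n * exp (-a * t ^ 2)) volume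
  simp only [hn.neg_pow, neg_sq, neg_mul, integral_neg] at h ⊢
  linarith

theorem integral_pow_add_two_mul_exp_neg_mul_sq (ha : 0 < a) (n : ℕ) :
    ∫ t : ℝ, t ^ (n + 2) * exp (-a * t ^ 2) =
      (n + 1) / (2 * a) * ∫ t : ℝ, t ^ n * exp (-a * t ^ 2) := by
  have hderiv (t : ℝ) : HasDerivAt (fun t : ℝ => t ^ (n + 1) * exp (-a * t ^ 2))
      ((n + 1) * (t ^ n * exp (-a * t ^ 2)) - 2 * a * (t ^ (n + 2) * exp (-a * t ^ 2))) t := by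
    have hpow := hasDerivAt_pow (n + 1) t
    have hexp := ((hasDerivAt_pow 2 t).const_mul (-a)).exp
    refine (hpow.mul hexp).congr_deriv ?_
    push_cast
    ring
  have hint := integrable_pow_mul_exp_neg_mul_sq ha
  have hzero := integral_eq_zero_of_hasDerivAt_of_integrable hderiv
    (((hint n).const_mul _).sub ((hint (n + 2)).const_mul _)) (hint (n + 1))
  rw [integral_sub ((hint n).const_mul _) ((hint (n + 2)).const_mul _), integral_const_mul,
    integral_const_mul] at hzero
  rw [div_mul_eq_mul_div, eq_div_iff (by positivity)]
  linarith

theorem integral_sq_sub_sq_mul_exp_neg_mul_sq_sub (ha : 0 < a) (μ m v : ℝ) :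
    ∫ y : ℝ, ((y - μ) ^ 2 - v) ^ 2 * exp (-a * (y - m) ^ 2) =
      (3 / (4 * a ^ 2) + (6 * (m - μ) ^ 2 - 2 * v) / (2 * a) + ((m - μ) ^ 2 - v) ^ 2) *
        √(π / a) := by
  have hshift : ∫ y : ℝ, ((y - μ) ^ 2 - v) ^ 2 * exp (-a * (y - m) ^ 2) =
      ∫ t : ℝ, ((t + (m - μ)) ^ 2 - v) ^ 2 * exp (-a * t ^ 2) := by
    rw [← integral_sub_right_eq_self (fun t ↦ ((t + (m - μ)) ^ 2 - v) ^ 2 * exp (-a * t ^ 2)) m]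
    congr with y
    rw [sub_add_sub_cancel]
  rw [hshift]
  generalize m - μ = d
  have hM0 : ∫ t : ℝ, t ^ 0 * exp (-a * t ^ 2) = √(π / a) := by
    simpa using integral_gaussian a
  have hM2 : ∫ t : ℝ, t ^ 2 * exp (-a * t ^ 2) = 1 / (2 * a) * √(π / a) := by
    rw [integral_pow_add_two_mul_exp_neg_mul_sq ha 0, hM0]
    norm_num
  have hM4 : ∫ t : ℝ, t ^ 4 * exp (-a * t ^ 2) = 3 / (4 * a ^ 2) * √(π / a) := by
    rw [integral_pow_add_two_mul_exp_neg_mul_sq ha 2, hM2]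
    field_simp
    norm_num
  have hM1 := integral_pow_mul_exp_neg_mul_sq_of_odd (a := a) odd_one
  have hM3 := integral_pow_mul_exp_neg_mul_sq_of_odd (a := a) (by decide : Odd 3)
  have h0 := integrable_pow_mul_exp_neg_mul_sq ha 0
  have h1 := integrable_pow_mul_exp_neg_mul_sq ha 1
  have h2 := integrable_pow_mul_exp_neg_mul_sq ha 2
  have h3 := integrable_pow_mul_exp_neg_mul_sq ha 3
  have h4 := integrable_pow_mul_exp_neg_mul_sq ha 4
  calc ∫ t : ℝ, ((t + d) ^ 2 - v) ^ 2 * exp (-a * t ^ 2)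
      = ∫ t : ℝ, t ^ 4 * exp (-a * t ^ 2) + 4 * d * (t ^ 3 * exp (-a * t ^ 2)) +
          (6 * d ^ 2 - 2 * v) * (t ^ 2 * exp (-a * t ^ 2)) +
          (4 * d ^ 3 - 4 * d * v) * (t ^ 1 * exp (-a * t ^ 2)) +
          (d ^ 2 - v) ^ 2 * (t ^ 0 * exp (-a * t ^ 2)) := by
        congr with t
        ring
    _ = _ := by
        rw [integral_add (by fun_prop) (by fun_prop), integral_add (by fun_prop) (by fun_prop),
          integral_add (by fun_prop) (by fun_prop), integral_add (by fun_prop) (by fun_prop)]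
        simp only [integral_const_mul, hM0, hM1, hM2, hM3, hM4]
        ring

end GaussianMoments

theorem integral_Ioi_zero_eq_integral_exp_smul_comp_exp {E : Type*} [NormedAddCommGroup E]
    [NormedSpace ℝ E] (f : ℝ → E) :
    ∫ x in Ioi 0, f x = ∫ y, exp y • f (exp y) := by
  rw [← range_exp, ← image_univ, integral_image_eq_integral_abs_deriv_smul MeasurableSet.univ
    (fun y _ => (hasDerivAt_exp y).hasDerivWithinAt) exp_injective.injOn, setIntegral_univ]
  simp only [abs_exp]

theorem lognormalPdf_exp (μ σ y : ℝ) :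
    lognormalPdf μ σ (exp y) = exp (-y - (y - μ) ^ 2 / (2 * σ ^ 2)) / (σ * √(2 * π)) := by
  rw [lognormalPdf, if_pos (exp_pos y), log_exp, sub_eq_add_neg (-y), exp_add, exp_neg, neg_div]
  field_simp

theorem exp_mul_scoreU2_sq_mul_lognormalPdf_exp_rpow {μ σ β : ℝ} (hσ : 0 < σ) (hβ : 0 < 1 + β)
    (y : ℝ) :
    exp y * (scoreU2 μ σ (exp y) ^ 2 * lognormalPdf μ σ (exp y) ^ (1 + β)) =
      exp (-β * μ + β ^ 2 * σ ^ 2 / (2 * (1 + β))) / ((σ * √(2 * π)) ^ (1 + β) * σ ^ 6) *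
        (((y - μ) ^ 2 - σ ^ 2) ^ 2 *
          exp (-((1 + β) / (2 * σ ^ 2)) * (y - (μ - β * σ ^ 2 / (1 + β))) ^ 2)) := by
  have hcomplete : exp y * exp ((-y - (y - μ) ^ 2 / (2 * σ ^ 2)) * (1 + β)) =
      exp (-β * μ + β ^ 2 * σ ^ 2 / (2 * (1 + β))) *
        exp (-((1 + β) / (2 * σ ^ 2)) * (y - (μ - β * σ ^ 2 / (1 + β))) ^ 2) := by
    rw [← exp_add, ← exp_add]
    congr 1
    field_simp
    ring
  rw [lognormalPdf_exp, div_rpow (exp_nonneg _) (by positivity), ← exp_mul, scoreU2, log_exp]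
  calc _ = ((y - μ) ^ 2 - σ ^ 2) ^ 2 / ((σ * √(2 * π)) ^ (1 + β) * σ ^ 6) *
        (exp y * exp ((-y - (y - μ) ^ 2 / (2 * σ ^ 2)) * (1 + β))) := by ring
    _ = _ := by rw [hcomplete]; ring

theorem sqrt_rpow_one_add {x : ℝ} (hx : 0 < x) (β : ℝ) : √x ^ (1 + β) = √x * x ^ (β / 2) := by
  rw [sqrt_eq_rpow, ← rpow_mul hx.le, ← rpow_add hx]
  ring_nf

theorem rpow_five_halves {x : ℝ} (hx : 0 < x) : x ^ (5 / 2 : ℝ) = x ^ 2 * √x := by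
  rw [sqrt_eq_rpow, ← rpow_natCast, ← rpow_add hx]
  norm_num

/-- The `(2,2)` entry of the matrix `J_β(μ,σ)`. -/
theorem J_entry_22 (μ σ β : ℝ) (hσ : 0 < σ) (hβ : 0 ≤ β) :
    ∫ x in Ioi (0 : ℝ), scoreU2 μ σ x ^ 2 * lognormalPdf μ σ x ^ (1 + β) =
      (Lfactor β μ σ / σ) *
        (β ^ 4 * σ ^ 4 / (1 + β) ^ 2 + 6 * β ^ 2 * σ ^ 2 / (1 + β) +
          β ^ 2 * (1 - 2 * σ ^ 2) + 2) := by
  have hβ' : 0 < 1 + β := by linarith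
  have h2π : 0 < 2 * π := by positivity
  have hsqrt : √(π / ((1 + β) / (2 * σ ^ 2))) = √(2 * π) * σ / √(1 + β) := by
    rw [show π / ((1 + β) / (2 * σ ^ 2)) = 2 * π * σ ^ 2 / (1 + β) by field_simp,
      sqrt_div' _ hβ'.le, sqrt_mul h2π.le, sqrt_sq hσ.le]
  rw [integral_Ioi_zero_eq_integral_exp_smul_comp_exp]
  simp_rw [smul_eq_mul, exp_mul_scoreU2_sq_mul_lognormalPdf_exp_rpow hσ hβ']
  rw [integral_const_mul, integral_sq_sub_sq_mul_exp_neg_mul_sq_sub (by positivity), hsqrt,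
    mul_rpow hσ.le (sqrt_nonneg _), sqrt_rpow_one_add h2π, Lfactor, rpow_five_halves hβ']
  have hsqrt_pos : 0 < √(1 + β) := sqrt_pos.2 hβ'
  have hsqrt_two_pi_pos : 0 < √(2 * π) := sqrt_pos.2 h2π
  field_simp
  ring
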